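/- Let X be a Tychonoff space with a countable π-base. If C_ph(X) (the bi-point-open topology) is separable, then X is an R-separable submetrizable space. -/

import Mathlib

open Set TopologicalSpace Filter

/-- The open-point topology on `C(X, ℝ)`, generated by the sets
`[U, r]⁻ = {f | ∃ x ∈ U, f x = r}` for `U` open in `X` and `r : ℝ`. -/
def openPointTop (X : Type*) [TopologicalSpace X] : TopologicalSpace C(X, ℝ) :=
  generateFrom {S | ∃ (U : Set X) (r : ℝ), IsOpen U ∧ S = {f : C(X, ℝ) | ∃ x ∈ U, f x = r}}

/-- The point-open topology (topology of pointwise convergence) on `C(X, ℝ)`. -/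
def pointOpenTop (X : Type*) [TopologicalSpace X] : TopologicalSpace C(X, ℝ) :=
  generateFrom {S | ∃ (x : X) (V : Set ℝ), IsOpen V ∧ S = {f : C(X, ℝ) | f x ∈ V}}

/-- The bi-compact-open topology `kh`: the join (coarsest common refinement) of the
compact-open topology and the open-point topology.  In Mathlib's order on
`TopologicalSpace` (where smaller = finer), this join is `⊓`. -/
def biCompactOpenTop (X : Type*) [TopologicalSpace X] : TopologicalSpace C(X, ℝ) :=
  ContinuousMap.compactOpen ⊓ openPointTop X

/-- The bi-point-open topology `ph`: the join of the point-open topology and the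
open-point topology. -/
def biPointOpenTop (X : Type*) [TopologicalSpace X] : TopologicalSpace C(X, ℝ) :=
  pointOpenTop X ⊓ openPointTop X

/-- `lc X` is the set of points of `X` having a compact neighborhood. -/
def lcSet (X : Type*) [TopologicalSpace X] : Set X :=
  {x | ∃ K : Set X, IsCompact K ∧ K ∈ nhds x}

/-- A set `A` is `Gδ`-dense if every nonempty `Gδ`-set meets it. -/
def GdeltaDense {X : Type*} [TopologicalSpace X] (A : Set X) : Prop :=
  ∀ G : Set X, IsGδ G → G.Nonempty → (G ∩ A).Nonempty

/-- A nonempty set `B` is an `R`-set if countably many continuous real functions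
map it onto all of `ℝ`. -/
def IsRSet {X : Type*} [TopologicalSpace X] (B : Set X) : Prop :=
  B.Nonempty ∧ ∃ f : ℕ → C(X, ℝ), (⋃ n, (f n) '' B) = Set.univ

/-- `X` is `R`-separable if there is a countable collection of `R`-sets such that
every nonempty open set contains a member of the collection. -/
def RSeparable (X : Type*) [TopologicalSpace X] : Prop :=
  ∃ S : ℕ → Set X, (∀ n, IsRSet (S n)) ∧
    ∀ U : Set X, IsOpen U → U.Nonempty → ∃ n, S n ⊆ U

/-- A topology is submetrizable if it is finer than some metrizable topology. -/
def Submetrizable (α : Type*) [t : TopologicalSpace α] : Prop :=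
  ∃ t' : TopologicalSpace α, @MetrizableSpace α t' ∧ t ≤ t'

/-- `X` is hemicompact if there is a sequence of compact sets cofinal in the
compact subsets of `X`. -/
def Hemicompact (X : Type*) [TopologicalSpace X] : Prop :=
  ∃ K : ℕ → Set X, (∀ n, IsCompact (K n)) ∧ ∀ A : Set X, IsCompact A → ∃ n, A ⊆ K n

/-- `X` is almost σ-compact if it has a dense σ-compact subset. -/
def AlmostSigmaCompact (X : Type*) [TopologicalSpace X] : Prop :=
  ∃ K : ℕ → Set X, (∀ n, IsCompact (K n)) ∧ Dense (⋃ n, K n)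

open Topology

/-!
A countable dense set `{gₖ}` in `C_ph(X)` is dense both for the open-point topology and for
the topology of pointwise convergence. Density for the open-point topology means that for every
nonempty open `U` and every `r : ℝ` some `gₖ` takes the value `r` on `U`, so every member of
the countable π-base is an `R`-set. Density for pointwise convergence means that the `gₖ`
separate the points of the Tychonoff space `X`, so `x ↦ (gₖ x)ₖ` is a continuous injection into
the metrizable space `ℝ^ℕ`, and `X` is submetrizable.
-/

lemma DenseRange.mono_topology {α ι : Type*} {t₁ t₂ : TopologicalSpace α} (h : t₁ ≤ t₂)
    {g : ι → α} (hg : @DenseRange α t₁ ι g) : @DenseRange α t₂ ι g :=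
  (@dense_iff_inter_open α t₂ _).2 fun U hU hne ↦
    (@dense_iff_inter_open α t₁ _).1 hg U (h U hU) hne

lemma Submetrizable.of_continuous_injective {X Y : Type*} [TopologicalSpace X]
    [TopologicalSpace Y] [MetrizableSpace Y] {e : X → Y} (hc : Continuous e)
    (hinj : Function.Injective e) : Submetrizable X := by
  refine ⟨induced e ‹_›, ?_, continuous_iff_le_induced.1 hc⟩
  let := induced e ‹TopologicalSpace Y›
  exact IsEmbedding.metrizableSpace ⟨⟨rfl⟩, hinj⟩

section

variable {X : Type*} [TopologicalSpace X]

lemma isOpen_openPointTop_setOf_exists_mem_eq {U : Set X} (hU : IsOpen U) (r : ℝ) :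
    IsOpen[openPointTop X] {f : C(X, ℝ) | ∃ x ∈ U, f x = r} :=
  isOpen_generateFrom_of_mem ⟨U, r, hU, rfl⟩

lemma isOpen_pointOpenTop_setOf_apply_mem (x : X) {V : Set ℝ} (hV : IsOpen V) :
    IsOpen[pointOpenTop X] {f : C(X, ℝ) | f x ∈ V} :=
  isOpen_generateFrom_of_mem ⟨x, V, hV, rfl⟩

lemma isRSet_of_denseRange_openPointTop {g : ℕ → C(X, ℝ)}
    (hg : @DenseRange _ (openPointTop X) _ g) {U : Set X} (hU : IsOpen U) (hne : U.Nonempty) :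
    IsRSet U := by
  let := openPointTop X
  refine ⟨hne, g, eq_univ_of_forall fun r ↦ ?_⟩
  obtain ⟨x₀, hx₀⟩ := hne
  obtain ⟨k, x, hx, hgx⟩ := hg.exists_mem_open
    (isOpen_openPointTop_setOf_exists_mem_eq hU r) ⟨ContinuousMap.const X r, x₀, hx₀, rfl⟩
  exact mem_iUnion.2 ⟨k, x, hx, hgx⟩

lemma exists_apply_ne_of_denseRange_pointOpenTop {ι : Type*} {g : ι → C(X, ℝ)}
    (hg : @DenseRange _ (pointOpenTop X) _ g) {x y : X} {f : C(X, ℝ)} (hf : f x ≠ f y) :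
    ∃ k, g k x ≠ g k y := by
  let := pointOpenTop X
  obtain ⟨U, V, hU, hV, hxU, hyV, hUV⟩ := t2_separation hf
  have hW : IsOpen ({h : C(X, ℝ) | h x ∈ U} ∩ {h | h y ∈ V}) :=
    (isOpen_pointOpenTop_setOf_apply_mem x hU).inter (isOpen_pointOpenTop_setOf_apply_mem y hV)
  obtain ⟨k, hkx, hky⟩ := hg.exists_mem_open hW ⟨f, hxU, hyV⟩
  exact ⟨k, hUV.ne_of_mem hkx hky⟩

lemma submetrizable_of_denseRange_pointOpenTop [T35Space X] {g : ℕ → C(X, ℝ)}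
    (hg : @DenseRange _ (pointOpenTop X) _ g) : Submetrizable X := by
  refine Submetrizable.of_continuous_injective (e := fun x k ↦ g k x)
    (continuous_pi fun k ↦ (g k).continuous) fun x y hexy ↦ ?_
  by_contra hxy
  obtain ⟨f, hf, hfxy⟩ := separatesPoints_continuous_of_t35Space hxy
  obtain ⟨k, hk⟩ := exists_apply_ne_of_denseRange_pointOpenTop hg (f := ⟨f, hf⟩) hfxy
  exact hk (congrFun hexy k)

end

theorem stmt18 {X : Type*} [TopologicalSpace X] [T2Space X] [CompletelyRegularSpace X] (P : ℕ → Set X)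
    (hopen : ∀ n, IsOpen (P n)) (hne : ∀ n, (P n).Nonempty)
    (hpi : ∀ U : Set X, IsOpen U → U.Nonempty → ∃ n, P n ⊆ U)
    (hsep : @SeparableSpace C(X, ℝ) (biPointOpenTop X)) :
    RSeparable X ∧ Submetrizable X := by
  have : T35Space X := {}
  obtain ⟨g, hg⟩ := @exists_dense_seq _ (biPointOpenTop X) hsep ⟨ContinuousMap.const X 0⟩
  have hg_op : @DenseRange _ (openPointTop X) _ g :=
    hg.mono_topology (inf_le_right : biPointOpenTop X ≤ _)
  have hg_po : @DenseRange _ (pointOpenTop X) _ g :=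
    hg.mono_topology (inf_le_left : biPointOpenTop X ≤ _)
  exact ⟨⟨P, fun n ↦ isRSet_of_denseRange_openPointTop hg_op (hopen n) (hne n), hpi⟩,
    submetrizable_of_denseRange_pointOpenTop hg_po⟩
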